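/- Fix an index α. Let a_{ij} (i ≠ j) be smooth functions on Ω satisfying the semihamiltonian conditions ∂_k a_{ij} = a_{ik} a_{kj} + a_{ij} a_{jk} − a_{ij} a_{ik} for all pairwise distinct i, j, k. Let h be a smooth solution of ∂_i ∂_j h = a_{ij} ∂_i h + a_{ji} ∂_j h (i ≠ j) such that h, ∂_α h and 1 − a_{iα} h/∂_α h (for every i ≠ α) are nonvanishing. Define A_{αi} = (1 − a_{iα} h/∂_α h)·(∂_i h/h) for i ≠ α, and A_{ij} = a_{ij} + ∂_j ln(1 − a_{iα} h/∂_α h) for i ≠ α and any j ≠ i (where ∂_j ln w means ∂_j w/w). Then for every smooth solution u of ∂_i ∂_j u = a_{ij} ∂_i u + a_{ji} ∂_j u (i ≠ j), the Lévy transform U = u − (h/∂_α h)·∂_α u satisfies ∂_i ∂_j U = A_{ij} ∂_i U + A_{ji} ∂_j U for all i ≠ j. -/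

import Mathlib

/-!
Write `φ = ∂_α u / ∂_α h` (`levyQuot`), so that `U = u - h φ`, and `v_k = ∂_k u - φ ∂_k h`
(`levyGrad`; note `v_α = 0`). The system for `u` and `h` gives `∂_k φ = a_{kα} v_k / ∂_α h` for
`k ≠ α`, hence `∂_k U = w_k v_k` with `w_k = 1 - a_{kα} h / ∂_α h` (`levyFactor`), while
`∂_α U = -h ∂_α φ`. Differentiating once more, `∂_i v_j = a_{ij} v_i + a_{ji} v_j - ∂_j h ∂_i φ`;
for `i = α` this is already the claim, and for `i, j ≠ α` the claim reduces to the identity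
`∂_j w_i = a_{ij} (w_j - w_i) - a_{iα} w_j ∂_j h / ∂_α h`, which is where the semihamiltonian
condition enters.
-/

/-- Partial derivative with respect to the `i`-th coordinate. -/
noncomputable def pd {n : ℕ} {F : Type*} [NormedAddCommGroup F] [NormedSpace ℝ F]
    (i : Fin n) (w : (Fin n → ℝ) → F) : (Fin n → ℝ) → F :=
  fun p => fderiv ℝ w p (Pi.single i 1)

open Filter Topology
open scoped ContDiff

section PartialDerivative

variable {n : ℕ} {i j : Fin n} {f g : (Fin n → ℝ) → ℝ} {p : Fin n → ℝ}

lemma pd_congr_of_eventuallyEq (hfg : f =ᶠ[𝓝 p] g) : pd i f p = pd i g p := by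
  simp only [pd, hfg.fderiv_eq]

lemma pd_sub (hf : DifferentiableAt ℝ f p) (hg : DifferentiableAt ℝ g p) :
    pd i (fun x => f x - g x) p = pd i f p - pd i g p := by
  simp [pd, fderiv_fun_sub hf hg]

lemma pd_const_sub (c : ℝ) : pd i (fun x => c - f x) p = -pd i f p := by
  simp [pd, fderiv_const_sub]

lemma pd_mul (hf : DifferentiableAt ℝ f p) (hg : DifferentiableAt ℝ g p) :
    pd i (fun x => f x * g x) p = f p * pd i g p + g p * pd i f p := by
  simp [pd, fderiv_fun_mul hf hg]

lemma pd_inv (hg : DifferentiableAt ℝ g p) (hg0 : g p ≠ 0) :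
    pd i (fun x => (g x)⁻¹) p = -pd i g p / g p ^ 2 := by
  change fderiv ℝ ((fun y : ℝ => y⁻¹) ∘ g) p _ = _
  rw [fderiv_comp p (differentiableAt_inv hg0) hg, fderiv_inv]
  simp only [pd, ContinuousLinearMap.comp_apply, ContinuousLinearMap.toSpanSingleton_apply,
    smul_eq_mul]
  ring

lemma pd_div (hf : DifferentiableAt ℝ f p) (hg : DifferentiableAt ℝ g p) (hg0 : g p ≠ 0) :
    pd i (fun x => f x / g x) p = (pd i f p * g p - f p * pd i g p) / g p ^ 2 := by
  simp only [div_eq_mul_inv]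
  rw [pd_mul hf (hg.fun_inv hg0), pd_inv hg hg0]
  field_simp
  ring

lemma ContDiffOn.pd_of_isOpen {s : Set (Fin n → ℝ)} (hf : ContDiffOn ℝ ∞ f s) (hs : IsOpen s) :
    ContDiffOn ℝ ∞ (pd i f) s :=
  (hf.fderiv_of_isOpen hs (by norm_cast)).clm_apply contDiffOn_const

lemma pd_comm (hf : ContDiffAt ℝ 2 f p) : pd i (pd j f) p = pd j (pd i f) p := by
  have hsymm : IsSymmSndFDerivAt ℝ f p :=
    hf.isSymmSndFDerivAt (by simp [minSmoothness_of_isRCLikeNormedField])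
  have hdiff : DifferentiableAt ℝ (fderiv ℝ f) p :=
    (hf.fderiv_right (m := 1) le_rfl).differentiableAt one_ne_zero
  have hpd_pd : ∀ k l : Fin n,
      pd k (pd l f) p = fderiv ℝ (fderiv ℝ f) p (Pi.single k 1) (Pi.single l 1) := by
    intro k l
    unfold pd
    rw [fderiv_clm_apply hdiff (differentiableAt_const _)]
    simp
  rw [hpd_pd, hpd_pd, hsymm.eq]

end PartialDerivative

section Levy

variable {n : ℕ} {Ω : Set (Fin n → ℝ)} {α i j k : Fin n} {a : Fin n → Fin n → (Fin n → ℝ) → ℝ}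
  {f h u : (Fin n → ℝ) → ℝ} {q : Fin n → ℝ}

def SolvesOn (a : Fin n → Fin n → (Fin n → ℝ) → ℝ) (Ω : Set (Fin n → ℝ))
    (u : (Fin n → ℝ) → ℝ) : Prop :=
  ∀ i j, i ≠ j → ∀ p ∈ Ω, pd i (pd j u) p = a i j p * pd i u p + a j i p * pd j u p

def IsSemihamiltonianOn (a : Fin n → Fin n → (Fin n → ℝ) → ℝ) (Ω : Set (Fin n → ℝ)) : Prop :=
  ∀ i j k, i ≠ j → j ≠ k → i ≠ k → ∀ p ∈ Ω,
    pd k (a i j) p = a i k p * a k j p + a i j p * a j k p - a i j p * a i k p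

noncomputable def levy (α : Fin n) (h u : (Fin n → ℝ) → ℝ) : (Fin n → ℝ) → ℝ :=
  fun x => u x - h x / pd α h x * pd α u x

noncomputable def levyQuot (α : Fin n) (h u : (Fin n → ℝ) → ℝ) : (Fin n → ℝ) → ℝ :=
  fun x => pd α u x / pd α h x

noncomputable def levyGrad (α : Fin n) (h u : (Fin n → ℝ) → ℝ) (k : Fin n) : (Fin n → ℝ) → ℝ :=
  fun x => pd k u x - levyQuot α h u x * pd k h x

noncomputable def levyFactor (a : Fin n → Fin n → (Fin n → ℝ) → ℝ) (α : Fin n) (h : (Fin n → ℝ) → ℝ)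
    (i : Fin n) : (Fin n → ℝ) → ℝ :=
  fun x => 1 - a i α x * h x / pd α h x

/-- The coefficients `L_α(a)` of the transformed system. -/
noncomputable def levyCoeff (a : Fin n → Fin n → (Fin n → ℝ) → ℝ) (α : Fin n) (h : (Fin n → ℝ) → ℝ)
    (i j : Fin n) : (Fin n → ℝ) → ℝ :=
  fun x => if i = α then levyFactor a α h j x * (pd j h x / h x)
    else a i j x + pd j (levyFactor a α h i) x / levyFactor a α h i x

lemma ContDiffOn.differentiableAt_of_isOpen (hf : ContDiffOn ℝ ∞ f Ω) (hΩ : IsOpen Ω)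
    (hq : q ∈ Ω) : DifferentiableAt ℝ f q :=
  (hf.differentiableOn (by simp)).differentiableAt (hΩ.mem_nhds hq)

lemma contDiffOn_levyQuot (hΩ : IsOpen Ω) (hh : ContDiffOn ℝ ∞ h Ω)
    (hu : ContDiffOn ℝ ∞ u Ω) (hdh0 : ∀ p ∈ Ω, pd α h p ≠ 0) :
    ContDiffOn ℝ ∞ (levyQuot α h u) Ω :=
  (hu.pd_of_isOpen hΩ).div (hh.pd_of_isOpen hΩ) hdh0

lemma contDiffOn_levyGrad (hΩ : IsOpen Ω) (hh : ContDiffOn ℝ ∞ h Ω)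
    (hu : ContDiffOn ℝ ∞ u Ω) (hdh0 : ∀ p ∈ Ω, pd α h p ≠ 0) :
    ContDiffOn ℝ ∞ (levyGrad α h u k) Ω :=
  (hu.pd_of_isOpen hΩ).sub ((contDiffOn_levyQuot hΩ hh hu hdh0).mul (hh.pd_of_isOpen hΩ))

lemma contDiffOn_levyFactor (hΩ : IsOpen Ω) (ha : ContDiffOn ℝ ∞ (a i α) Ω)
    (hh : ContDiffOn ℝ ∞ h Ω) (hdh0 : ∀ p ∈ Ω, pd α h p ≠ 0) :
    ContDiffOn ℝ ∞ (levyFactor a α h i) Ω :=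
  contDiffOn_const.sub ((ha.mul hh).div (hh.pd_of_isOpen hΩ) hdh0)

lemma contDiffOn_levy (hΩ : IsOpen Ω) (hh : ContDiffOn ℝ ∞ h Ω)
    (hu : ContDiffOn ℝ ∞ u Ω) (hdh0 : ∀ p ∈ Ω, pd α h p ≠ 0) :
    ContDiffOn ℝ ∞ (levy α h u) Ω :=
  hu.sub ((hh.div (hh.pd_of_isOpen hΩ) hdh0).mul (hu.pd_of_isOpen hΩ))

lemma levy_eq_sub_mul_levyQuot : levy α h u = fun x => u x - h x * levyQuot α h u x := by
  funext x
  simp only [levy, levyQuot]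
  ring

lemma levyGrad_self (hdh0 : pd α h q ≠ 0) : levyGrad α h u α q = 0 := by
  simp [levyGrad, levyQuot, hdh0]

lemma pd_levy (hΩ : IsOpen Ω) (hh : ContDiffOn ℝ ∞ h Ω) (hu : ContDiffOn ℝ ∞ u Ω)
    (hdh0 : ∀ p ∈ Ω, pd α h p ≠ 0) (hq : q ∈ Ω) :
    pd k (levy α h u) q = levyGrad α h u k q - h q * pd k (levyQuot α h u) q := by
  rw [levy_eq_sub_mul_levyQuot, pd_sub (hu.differentiableAt_of_isOpen hΩ hq)
    ((hh.differentiableAt_of_isOpen hΩ hq).fun_mul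
      ((contDiffOn_levyQuot hΩ hh hu hdh0).differentiableAt_of_isOpen hΩ hq)),
    pd_mul (hh.differentiableAt_of_isOpen hΩ hq)
      ((contDiffOn_levyQuot hΩ hh hu hdh0).differentiableAt_of_isOpen hΩ hq)]
  simp only [levyGrad]
  ring

lemma pd_levyQuot_of_ne (hk : k ≠ α) (hΩ : IsOpen Ω) (hh : ContDiffOn ℝ ∞ h Ω)
    (hheq : SolvesOn a Ω h) (hdh0 : ∀ p ∈ Ω, pd α h p ≠ 0) (hu : ContDiffOn ℝ ∞ u Ω)
    (hueq : SolvesOn a Ω u) (hq : q ∈ Ω) :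
    pd k (levyQuot α h u) q = a k α q * levyGrad α h u k q / pd α h q := by
  have hdhq := hdh0 q hq
  unfold levyQuot
  rw [pd_div ((hu.pd_of_isOpen hΩ).differentiableAt_of_isOpen hΩ hq)
    ((hh.pd_of_isOpen hΩ).differentiableAt_of_isOpen hΩ hq) hdhq,
    hueq k α hk q hq, hheq k α hk q hq]
  simp only [levyGrad, levyQuot]
  field_simp
  ring

lemma pd_levy_of_ne (hk : k ≠ α) (hΩ : IsOpen Ω) (hh : ContDiffOn ℝ ∞ h Ω)
    (hheq : SolvesOn a Ω h) (hdh0 : ∀ p ∈ Ω, pd α h p ≠ 0) (hu : ContDiffOn ℝ ∞ u Ω)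
    (hueq : SolvesOn a Ω u) (hq : q ∈ Ω) :
    pd k (levy α h u) q = levyFactor a α h k q * levyGrad α h u k q := by
  rw [pd_levy hΩ hh hu hdh0 hq, pd_levyQuot_of_ne hk hΩ hh hheq hdh0 hu hueq hq, levyFactor]
  ring

lemma pd_levy_eventuallyEq (hk : k ≠ α) (hΩ : IsOpen Ω) (hh : ContDiffOn ℝ ∞ h Ω)
    (hheq : SolvesOn a Ω h) (hdh0 : ∀ p ∈ Ω, pd α h p ≠ 0) (hu : ContDiffOn ℝ ∞ u Ω)
    (hueq : SolvesOn a Ω u) (hq : q ∈ Ω) :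
    pd k (levy α h u) =ᶠ[𝓝 q] fun x => levyFactor a α h k x * levyGrad α h u k x :=
  eventuallyEq_of_mem (hΩ.mem_nhds hq) fun _ hx => pd_levy_of_ne hk hΩ hh hheq hdh0 hu hueq hx

lemma pd_levyGrad (hij : i ≠ j) (hΩ : IsOpen Ω) (hh : ContDiffOn ℝ ∞ h Ω)
    (hheq : SolvesOn a Ω h) (hdh0 : ∀ p ∈ Ω, pd α h p ≠ 0) (hu : ContDiffOn ℝ ∞ u Ω)
    (hueq : SolvesOn a Ω u) (hq : q ∈ Ω) :
    pd i (levyGrad α h u j) q = a i j q * levyGrad α h u i q + a j i q * levyGrad α h u j q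
      - pd j h q * pd i (levyQuot α h u) q := by
  have hφ := (contDiffOn_levyQuot hΩ hh hu hdh0).differentiableAt_of_isOpen hΩ hq
  have hdjh := (hh.pd_of_isOpen (i := j) hΩ).differentiableAt_of_isOpen hΩ hq
  unfold levyGrad
  rw [pd_sub ((hu.pd_of_isOpen hΩ).differentiableAt_of_isOpen hΩ hq) (hφ.fun_mul hdjh),
    pd_mul hφ hdjh, hueq i j hij q hq, hheq i j hij q hq]
  ring

lemma pd_levyFactor (hiα : i ≠ α) (hjα : j ≠ α) (hij : i ≠ j) (hΩ : IsOpen Ω)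
    (ha : ∀ i j, i ≠ j → ContDiffOn ℝ ∞ (a i j) Ω) (hsemi : IsSemihamiltonianOn a Ω)
    (hh : ContDiffOn ℝ ∞ h Ω) (hheq : SolvesOn a Ω h) (hdh0 : ∀ p ∈ Ω, pd α h p ≠ 0)
    (hq : q ∈ Ω) :
    pd j (levyFactor a α h i) q = a i j q * (levyFactor a α h j q - levyFactor a α h i q)
      - a i α q * levyFactor a α h j q * pd j h q / pd α h q := by
  have hdhq := hdh0 q hq
  have ha' := (ha i α hiα).differentiableAt_of_isOpen hΩ hq
  have hh' := hh.differentiableAt_of_isOpen hΩ hq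
  unfold levyFactor
  rw [pd_const_sub, pd_div (ha'.fun_mul hh')
    ((hh.pd_of_isOpen hΩ).differentiableAt_of_isOpen hΩ hq) hdhq, pd_mul ha' hh',
    hsemi i α j hiα hjα.symm hij q hq, hheq j α hjα q hq]
  field_simp
  ring

lemma pd_self_pd_levy (hk : k ≠ α) (hΩ : IsOpen Ω)
    (ha : ∀ i j, i ≠ j → ContDiffOn ℝ ∞ (a i j) Ω) (hh : ContDiffOn ℝ ∞ h Ω)
    (hheq : SolvesOn a Ω h) (hh0 : ∀ p ∈ Ω, h p ≠ 0) (hdh0 : ∀ p ∈ Ω, pd α h p ≠ 0)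
    (hw0 : ∀ i, i ≠ α → ∀ p ∈ Ω, levyFactor a α h i p ≠ 0) (hu : ContDiffOn ℝ ∞ u Ω)
    (hueq : SolvesOn a Ω u) (hq : q ∈ Ω) :
    pd α (pd k (levy α h u)) q = levyCoeff a α h α k q * pd α (levy α h u) q
      + levyCoeff a α h k α q * pd k (levy α h u) q := by
  have hhq := hh0 q hq
  have hwk := hw0 k hk q hq
  rw [pd_congr_of_eventuallyEq (pd_levy_eventuallyEq hk hΩ hh hheq hdh0 hu hueq hq),
    pd_mul ((contDiffOn_levyFactor hΩ (ha k α hk) hh hdh0).differentiableAt_of_isOpen hΩ hq)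
      ((contDiffOn_levyGrad hΩ hh hu hdh0).differentiableAt_of_isOpen hΩ hq),
    pd_levyGrad hk.symm hΩ hh hheq hdh0 hu hueq hq, levyGrad_self (hdh0 q hq),
    pd_levy hΩ hh hu hdh0 hq, levyGrad_self (hdh0 q hq),
    pd_levy_of_ne hk hΩ hh hheq hdh0 hu hueq hq]
  simp only [levyCoeff, if_pos, if_neg hk]
  field_simp
  ring

lemma pd_pd_levy_of_ne (hiα : i ≠ α) (hjα : j ≠ α) (hij : i ≠ j) (hΩ : IsOpen Ω)
    (ha : ∀ i j, i ≠ j → ContDiffOn ℝ ∞ (a i j) Ω) (hsemi : IsSemihamiltonianOn a Ω)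
    (hh : ContDiffOn ℝ ∞ h Ω) (hheq : SolvesOn a Ω h) (hdh0 : ∀ p ∈ Ω, pd α h p ≠ 0)
    (hw0 : ∀ i, i ≠ α → ∀ p ∈ Ω, levyFactor a α h i p ≠ 0) (hu : ContDiffOn ℝ ∞ u Ω)
    (hueq : SolvesOn a Ω u) (hq : q ∈ Ω) :
    pd i (pd j (levy α h u)) q = levyCoeff a α h i j q * pd i (levy α h u) q
      + levyCoeff a α h j i q * pd j (levy α h u) q := by
  have hdhq := hdh0 q hq
  have hwi := hw0 i hiα q hq
  have hwj := hw0 j hjα q hq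
  rw [pd_congr_of_eventuallyEq (pd_levy_eventuallyEq hjα hΩ hh hheq hdh0 hu hueq hq),
    pd_mul ((contDiffOn_levyFactor hΩ (ha j α hjα) hh hdh0).differentiableAt_of_isOpen hΩ hq)
      ((contDiffOn_levyGrad hΩ hh hu hdh0).differentiableAt_of_isOpen hΩ hq),
    pd_levyGrad hij hΩ hh hheq hdh0 hu hueq hq,
    pd_levyQuot_of_ne hiα hΩ hh hheq hdh0 hu hueq hq,
    pd_levy_of_ne hiα hΩ hh hheq hdh0 hu hueq hq, pd_levy_of_ne hjα hΩ hh hheq hdh0 hu hueq hq]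
  simp only [levyCoeff, if_neg hiα, if_neg hjα]
  rw [pd_levyFactor hiα hjα hij hΩ ha hsemi hh hheq hdh0 hq,
    pd_levyFactor hjα hiα hij.symm hΩ ha hsemi hh hheq hdh0 hq]
  field_simp
  ring

theorem SolvesOn.levy (hΩ : IsOpen Ω) (ha : ∀ i j, i ≠ j → ContDiffOn ℝ ∞ (a i j) Ω)
    (hsemi : IsSemihamiltonianOn a Ω) (hh : ContDiffOn ℝ ∞ h Ω) (hheq : SolvesOn a Ω h)
    (hh0 : ∀ p ∈ Ω, h p ≠ 0) (hdh0 : ∀ p ∈ Ω, pd α h p ≠ 0)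
    (hw0 : ∀ i, i ≠ α → ∀ p ∈ Ω, levyFactor a α h i p ≠ 0) (hu : ContDiffOn ℝ ∞ u Ω)
    (hueq : SolvesOn a Ω u) : SolvesOn (levyCoeff a α h) Ω (levy α h u) := by
  intro i j hij p hp
  rcases eq_or_ne i α with rfl | hiα
  · exact pd_self_pd_levy hij.symm hΩ ha hh hheq hh0 hdh0 hw0 hu hueq hp
  rcases eq_or_ne j α with rfl | hjα
  · have hU : ContDiffAt ℝ 2 (levy j h u) p :=
      ((contDiffOn_levy hΩ hh hu hdh0).contDiffAt (hΩ.mem_nhds hp)).of_le (by norm_cast)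
    rw [pd_comm hU, pd_self_pd_levy hiα hΩ ha hh hheq hh0 hdh0 hw0 hu hueq hp, add_comm]
  · exact pd_pd_levy_of_ne hiα hjα hij hΩ ha hsemi hh hheq hdh0 hw0 hu hueq hp

end Levy

/-- the Lévy transform `U = u − (h/∂_α h)∂_α u` of any solution `u` of
`∂_i∂_j u = a_{ij}∂_i u + a_{ji}∂_j u` satisfies the same system with the transformed
coefficients `A = L_α(a)`. -/
theorem stmt10 {n : ℕ} (Ω : Set (Fin n → ℝ)) (hΩ : IsOpen Ω) (α : Fin n)
    (a : Fin n → Fin n → (Fin n → ℝ) → ℝ)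
    (hasm : ∀ i j, i ≠ j → ContDiffOn ℝ (⊤ : ℕ∞) (a i j) Ω)
    (hsemi : ∀ i j k, i ≠ j → j ≠ k → i ≠ k → ∀ p ∈ Ω,
      pd k (a i j) p = a i k p * a k j p + a i j p * a j k p - a i j p * a i k p)
    (h : (Fin n → ℝ) → ℝ) (hhsm : ContDiffOn ℝ (⊤ : ℕ∞) h Ω)
    (hheq : ∀ i j, i ≠ j → ∀ p ∈ Ω,
      pd i (pd j h) p = a i j p * pd i h p + a j i p * pd j h p)
    (hh0 : ∀ p ∈ Ω, h p ≠ 0)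
    (hdh0 : ∀ p ∈ Ω, pd α h p ≠ 0)
    (hw0 : ∀ i, i ≠ α → ∀ p ∈ Ω, 1 - a i α p * h p / pd α h p ≠ 0)
    (A : Fin n → Fin n → (Fin n → ℝ) → ℝ)
    (hAα : ∀ i, i ≠ α → ∀ p,
      A α i p = (1 - a i α p * h p / pd α h p) * (pd i h p / h p))
    (hAi : ∀ i j, i ≠ α → j ≠ i → ∀ p,
      A i j p = a i j p
        + pd j (fun x => 1 - a i α x * h x / pd α h x) p
            / (1 - a i α p * h p / pd α h p)) :
    ∀ u : (Fin n → ℝ) → ℝ, ContDiffOn ℝ (⊤ : ℕ∞) u Ω →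
      (∀ i j, i ≠ j → ∀ p ∈ Ω,
        pd i (pd j u) p = a i j p * pd i u p + a j i p * pd j u p) →
      ∀ i j, i ≠ j → ∀ p ∈ Ω,
        pd i (pd j (fun x => u x - (h x / pd α h x) * pd α u x)) p
          = A i j p * pd i (fun x => u x - (h x / pd α h x) * pd α u x) p
            + A j i p * pd j (fun x => u x - (h x / pd α h x) * pd α u x) p := by
  intro u hu hueq i j hij p hp
  have hA : ∀ i j, i ≠ j → A i j p = levyCoeff a α h i j p := by
    intro i j hij
    by_cases hiα : i = α
    · subst hiα
      simp only [levyCoeff, if_pos, hAα j hij.symm p, levyFactor]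
    · simp only [levyCoeff, if_neg hiα, hAi i j hiα hij.symm p]
      rfl
  rw [hA i j hij, hA j i hij.symm]
  exact SolvesOn.levy hΩ hasm hsemi hhsm hheq hh0 hdh0 hw0 hu hueq i j hij p hp
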